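/- Let X, Y be independent Gaussian vectors in R^k with diagonal covariances and LS = max_{‖w‖=1} P((X−Y)·w > 0) attained at w* with (μ(X)−μ(Y))·w* > 0. Fix a coordinate j with w*_j ≠ 0 and let X', Y' be identical in distribution to X, Y except that σ²_j(X') + σ²_j(Y') < σ²_j(X) + σ²_j(Y) while all means are unchanged. Then LS' = max_{‖w‖=1} P((X'−Y')·w > 0) > LS. -/

import Mathlib

/-! The probability that the Gaussian `(X - Y) ⬝ w` is positive is `Φ(m / √v)`, where `m` is the
projected mean gap and `v` the projected variance. Lowering `d j` strictly lowers `v` at `w⋆`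
because `w⋆ j ≠ 0`, so, as `m > 0`, the separability at `w⋆` strictly increases; the new optimum
is at least that value. -/

open ProbabilityTheory

/-- For independent Gaussian vectors `X, Y` in `ℝ^k` with diagonal covariances,
mean difference `u = μ(X) - μ(Y)` and per-axis variance sums `d j = σ²_j(X) + σ²_j(Y)`,
the projection `(X - Y) ⬝ w` is Gaussian with mean `u ⬝ w` and variance
`Σ_j d j * w j ^ 2`; so `P((X - Y) ⬝ w > 0)` is the mass the corresponding Gaussian
assigns to `(0, ∞)`. -/
noncomputable def sepProb (k : ℕ) (u : Fin k → ℝ) (d : Fin k → NNReal)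
    (w : Fin k → ℝ) : ℝ :=
  (gaussianReal (∑ j, u j * w j) (∑ j, d j * ‖w j‖₊ ^ 2) (Set.Ioi 0)).toReal

/-- The set of unit vectors of `ℝ^k`. -/
def unitVecs (k : ℕ) : Set (Fin k → ℝ) := {w | ∑ j, w j ^ 2 = 1}

open MeasureTheory Set
open scoped NNReal

lemma gaussianReal_Ioc_pos (m : ℝ) {v : ℝ≥0} (hv : v ≠ 0) {a b : ℝ} (hab : a < b) :
    0 < gaussianReal m v (Ioc a b) := by
  refine pos_iff_ne_zero.2 fun h => hab.not_ge ?_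
  simpa using gaussianReal_absolutelyContinuous' m hv h

lemma gaussianReal_Ioi_zero_strictMono {v : ℝ≥0} (hv : v ≠ 0) :
    StrictMono fun m : ℝ => gaussianReal m v (Ioi 0) := by
  intro a b hab
  have hshift : gaussianReal b v (Ioi 0) = gaussianReal a v (Ioi (a - b)) := by
    have hmap := gaussianReal_map_add_const (μ := a) (v := v) (b - a)
    rw [add_sub_cancel] at hmap
    rw [← hmap, Measure.map_apply (by fun_prop) measurableSet_Ioi]
    congr 1
    ext x
    simp
  have hsplit : Ioi (a - b) = Ioc (a - b) 0 ∪ Ioi 0 :=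
    (Ioc_union_Ioi_eq_Ioi (by linarith)).symm
  change gaussianReal a v (Ioi 0) < gaussianReal b v (Ioi 0)
  rw [hshift, hsplit, measure_union (Ioc_disjoint_Ioi le_rfl) measurableSet_Ioi, add_comm]
  exact ENNReal.lt_add_right (measure_ne_top _ _) (gaussianReal_Ioc_pos a hv (by linarith)).ne'

lemma gaussianReal_Ioi_zero_eq_standardize (m : ℝ) {v : ℝ≥0} (hv : v ≠ 0) :
    gaussianReal m v (Ioi 0) = gaussianReal (m / √v) 1 (Ioi 0) := by
  have hmap := gaussianReal_map_div_const (μ := m) (v := v) √v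
  have hsq : NNReal.mk (√v ^ 2) (sq_nonneg _) = v := by ext; simp
  rw [hsq, div_self hv] at hmap
  rw [← hmap, Measure.map_apply (by fun_prop) measurableSet_Ioi]
  have hsqrt : 0 < √(v : ℝ) := Real.sqrt_pos.2 (by positivity)
  congr 1
  ext x
  simp [div_pos_iff_of_pos_right hsqrt]

lemma gaussianReal_Ioi_zero_lt_of_var_lt {m : ℝ} (hm : 0 < m) {v v' : ℝ≥0} (hv' : 0 < v')
    (hlt : v' < v) : gaussianReal m v (Ioi 0) < gaussianReal m v' (Ioi 0) := by
  rw [gaussianReal_Ioi_zero_eq_standardize m (hv'.trans hlt).ne',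
    gaussianReal_Ioi_zero_eq_standardize m hv'.ne']
  refine gaussianReal_Ioi_zero_strictMono one_ne_zero (div_lt_div_of_pos_left hm ?_ ?_)
  · exact Real.sqrt_pos.2 (by exact_mod_cast hv')
  · exact Real.sqrt_lt_sqrt v'.2 (by exact_mod_cast hlt)

lemma sum_mul_nnnorm_sq_lt_of_lt_at {ι : Type*} [Fintype ι] {d d' : ι → ℝ≥0}
    {w : ι → ℝ} {j : ι} (hwj : w j ≠ 0) (hsame : ∀ i, i ≠ j → d' i = d i) (hdec : d' j < d j) :
    ∑ i, d' i * ‖w i‖₊ ^ 2 < ∑ i, d i * ‖w i‖₊ ^ 2 := by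
  refine Finset.sum_lt_sum (fun i _ => ?_) ⟨j, Finset.mem_univ j, ?_⟩
  · rcases eq_or_ne i j with rfl | hij
    · gcongr
    · rw [hsame i hij]
  · exact mul_lt_mul_of_pos_right hdec (pow_pos (nnnorm_pos.2 hwj) 2)

lemma sepProb_le_one (k : ℕ) (u : Fin k → ℝ) (d : Fin k → ℝ≥0) (w : Fin k → ℝ) :
    sepProb k u d w ≤ 1 :=
  ENNReal.toReal_le_of_le_ofReal zero_le_one (by simpa using prob_le_one)

theorem variance_decrease_increases_separability_general
    (k : ℕ) (u : Fin k → ℝ) (d : Fin k → NNReal)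
    (wstar : Fin k → ℝ) (hws : wstar ∈ unitVecs k)
    (hmean : 0 < ∑ j, u j * wstar j)
    (j : Fin k) (hwj : wstar j ≠ 0)
    (d' : Fin k → NNReal) (hd' : ∀ i, 0 < d' i)
    (hsame : ∀ i, i ≠ j → d' i = d i) (hdec : d' j < d j) :
    sepProb k u d wstar < sSup ((fun w => sepProb k u d' w) '' unitVecs k) := by
  have hvar_pos : 0 < ∑ i, d' i * ‖wstar i‖₊ ^ 2 :=
    Finset.sum_pos' (fun i _ => zero_le)
      ⟨j, Finset.mem_univ j, mul_pos (hd' j) (pow_pos (nnnorm_pos.2 hwj) 2)⟩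
  have hsep : sepProb k u d wstar < sepProb k u d' wstar :=
    (ENNReal.toReal_lt_toReal (measure_ne_top _ _) (measure_ne_top _ _)).2 <|
      gaussianReal_Ioi_zero_lt_of_var_lt hmean hvar_pos
        (sum_mul_nnnorm_sq_lt_of_lt_at hwj hsame hdec)
  have hbdd : BddAbove ((fun w => sepProb k u d' w) '' unitVecs k) := by
    refine ⟨1, ?_⟩
    rintro _ ⟨w, -, rfl⟩
    exact sepProb_le_one k u d' w
  exact hsep.trans_le (le_csSup hbdd ⟨wstar, hws, rfl⟩)

/-- Negative correlation of the per-axis variance with linear separability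
(half of Proposition 2): if `w⋆` attains the optimal linear separability
`LS = sepProb k u d w⋆` with positive projected mean gap `(μ(X)-μ(Y)) ⬝ w⋆ > 0` and
`w⋆ j ≠ 0`, and the classes are changed only in coordinate `j` so that the per-axis
variance sum strictly decreases (`d' j < d j`) while all means are unchanged, then
the new optimal linear separability `LS' = sup_{‖w‖=1} sepProb k u d' w` is strictly
larger than `LS`. -/
theorem variance_decrease_increases_separability
    (k : ℕ) (u : Fin k → ℝ) (d : Fin k → NNReal) (hd : ∀ i, 0 < d i)
    (wstar : Fin k → ℝ) (hws : wstar ∈ unitVecs k)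
    (hmax : ∀ w ∈ unitVecs k, sepProb k u d w ≤ sepProb k u d wstar)
    (hmean : 0 < ∑ j, u j * wstar j)
    (j : Fin k) (hwj : wstar j ≠ 0)
    (d' : Fin k → NNReal) (hd' : ∀ i, 0 < d' i)
    (hsame : ∀ i, i ≠ j → d' i = d i) (hdec : d' j < d j) :
    sepProb k u d wstar < sSup ((fun w => sepProb k u d' w) '' unitVecs k) :=
  variance_decrease_increases_separability_general k u d wstar hws hmean j hwj d' hd' hsame hdec
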